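/- For any connected closed 5-coloured graph 𝒢, any colour ℓ, and any three-element colour set c ⊂ {1,…,5} with ℓ ∈ c, one has |B_ℓ| + |E(c)| − Σ_{b∈B_ℓ} |E_b(c)| ≤ 1. -/

import Mathlib

/-- A closed `k`-coloured graph: a finite bipartite `k`-regular graph whose lines carry
colours in `Fin k`, each node meeting exactly one line of each colour.  It is encoded by a
finite node set together with, for each colour, a fixed-point-free involutive pairing
(perfect matching) exchanging the two node classes (`sign`). -/
structure ColouredGraph (k : ℕ) where
  /-- the nodes of the graph -/
  V : Type
  fintypeV : Fintype V
  /-- the bipartition of the nodes (black/white) -/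
  sign : V → Bool
  /-- `adj c v` is the node joined to `v` by the line of colour `c` at `v` -/
  adj : Fin k → V → V
  adj_invol : ∀ c, Function.Involutive (adj c)
  adj_ne : ∀ c v, adj c v ≠ v
  adj_sign : ∀ c v, sign (adj c v) = ! sign v

namespace ColouredGraph

variable {k : ℕ} (G : ColouredGraph k)

instance : Fintype G.V := G.fintypeV

/-- One step along a line whose colour lies in `S`. -/
def Step (S : Set (Fin k)) (v w : G.V) : Prop := ∃ c ∈ S, G.adj c v = w

/-- Reachability using only lines whose colours lie in `S`. -/
def Reach (S : Set (Fin k)) : G.V → G.V → Prop := Relation.ReflTransGen (G.Step S)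

/-- The connected components of the subgraph of `G` formed by the lines whose colours
lie in `S`.  For `S = {ℓ}ᶜ` these are the bubbles of colour `ℓ`; for a pair
`S = {i,j}` these are the faces of colours `(ij)` (bicoloured cycles); for a triple these
are the subgraphs dual to simplicial edges (in 4d). -/
def Component (S : Set (Fin k)) : Type := Quot (G.Reach S)

instance (S : Set (Fin k)) : Finite (G.Component S) := Quot.finite _

/-- The number of connected components of the subgraph with colours in `S`. -/
noncomputable def numComponents (S : Set (Fin k)) : ℕ := Nat.card (G.Component S)

/-- `G` is connected. -/
def Connected : Prop := ∀ v w : G.V, G.Reach Set.univ v w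

/-- The number of nodes of `G` lying in the component `b`. -/
noncomputable def nodesIn (S : Set (Fin k)) (b : G.Component S) : ℕ :=
  Nat.card {v : G.V // Quot.mk (G.Reach S) v = b}

/-- The component `x` of the subgraph with colours in `S'` lies inside the component
`b` of the subgraph with colours in `S` (intended for `S' ⊆ S`). -/
def MemIn {S S' : Set (Fin k)} (x : G.Component S') (b : G.Component S) : Prop :=
  ∃ v : G.V, Quot.mk (G.Reach S') v = x ∧ Quot.mk (G.Reach S) v = b

/-- The number of components of the subgraph with colours in `S'` contained in the
component `b` of the subgraph with colours in `S` (intended for `S' ⊆ S`). -/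
noncomputable def countIn (S S' : Set (Fin k)) (b : G.Component S) : ℕ :=
  Nat.card {x : G.Component S' // G.MemIn x b}

/-- The lines of the subgraph with colours in `S` lying in the component `b`: pairs
`(v, c)` with `c ∈ S` and `v` a node of `b`, two such pairs being identified when they
describe the same line. -/
def LineIn (S : Set (Fin k)) (b : G.Component S) : Type :=
  Quot (fun p q : {x : G.V × Fin k // x.2 ∈ S ∧ Quot.mk (G.Reach S) x.1 = b} =>
    p.1.2 = q.1.2 ∧ (q.1.1 = p.1.1 ∨ q.1.1 = G.adj p.1.2 p.1.1))

instance (S : Set (Fin k)) (b : G.Component S) : Finite (G.LineIn S b) := Quot.finite _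

/-- The number of lines of the component `b` of the subgraph with colours in `S`. -/
noncomputable def linesIn (S : Set (Fin k)) (b : G.Component S) : ℕ :=
  Nat.card (G.LineIn S b)

/-- The lines of `G`: pairs `(v, c)`, identified when describing the same line. -/
def Line : Type :=
  Quot (fun p q : G.V × Fin k =>
    p.2 = q.2 ∧ (q.1 = p.1 ∨ q.1 = G.adj p.2 p.1))

instance : Finite G.Line := Quot.finite _

/-- The number of lines of `G` (equal to `k·𝒩/2`). -/
noncomputable def numLines : ℕ := Nat.card G.Line


end ColouredGraph


/-!
The bubbles `B_ℓ` and the edges `E(c)` are the vertices of a bipartite multigraph whose lines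
are the faces of colours `c ∖ {ℓ}`: each face joins the bubble and the edge containing it, so a
bubble `b` has exactly `|E_b(c)|` lines. Since `ℓ ∈ c`, every line of `𝒢` lies in a bubble or in
an edge, so connectivity of `𝒢` makes this multigraph connected, and a connected multigraph has
at most one vertex more than it has lines.
-/

theorem Nat.card_le_card_add_one_of_eqvGen {X V : Type*} [Finite X] (f g : X → V)
    (hconn : ∀ v w, Relation.EqvGen (fun a b => ∃ x, f x = a ∧ g x = b) v w) :
    Nat.card V ≤ Nat.card X + 1 := by
  set H := SimpleGraph.fromRel fun a b => ∃ x, f x = a ∧ g x = b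
  rcases isEmpty_or_nonempty V with hV | hV
  · simp
  obtain ⟨v₀⟩ := hV
  have hH : H.Connected := by
    refine H.connected_iff_exists_forall_reachable.2 ⟨v₀, fun w => ?_⟩
    induction hconn v₀ w with
    | rel a b hab =>
      by_cases h : a = b
      · exact h ▸ .rfl
      · exact (SimpleGraph.fromRel_adj _ a b |>.2 ⟨h, .inl hab⟩).reachable
    | refl => rfl
    | symm _ _ _ ih => exact ih.symm
    | trans _ _ _ _ _ ih₁ ih₂ => exact ih₁.trans ih₂
  have hedges : H.edgeSet ⊆ Set.range fun x => s(f x, g x) := by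
    intro e he
    induction e using Sym2.ind with
    | h a b =>
      obtain ⟨-, ⟨x, rfl, rfl⟩ | ⟨x, rfl, rfl⟩⟩ := he
      · exact ⟨x, rfl⟩
      · exact ⟨x, Sym2.eq_swap⟩
  calc Nat.card V ≤ Nat.card H.edgeSet + 1 := hH.card_vert_le_card_edgeSet_add_one
    _ ≤ Nat.card (Set.range fun x => s(f x, g x)) + 1 := by
      gcongr; exact Nat.card_mono (Set.finite_range _) hedges
    _ ≤ Nat.card X + 1 := by gcongr; exact Finite.card_range_le _

theorem finsum_card_fiber {α β : Type*} [Finite α] [Finite β] (f : α → β) :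
    ∑ᶠ b, Nat.card {a // f a = b} = Nat.card α := by
  have := Fintype.ofFinite β
  rw [finsum_eq_sum_of_fintype, ← Nat.card_sigma, Nat.card_congr (Equiv.sigmaFiberEquiv f)]

namespace ColouredGraph

variable {k : ℕ} (G : ColouredGraph k) {S S' T U : Set (Fin k)}

theorem reach_mono (h : S ⊆ S') {v w : G.V} (hr : G.Reach S v w) : G.Reach S' v w :=
  Relation.ReflTransGen.mono (fun _ _ ⟨c, hc, hadj⟩ => ⟨c, h hc, hadj⟩) _ _ hr

theorem reach_adj {c : Fin k} (hc : c ∈ S) (v : G.V) : G.Reach S v (G.adj c v) :=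
  .single ⟨c, hc, rfl⟩

def componentMap (h : S ⊆ S') : G.Component S → G.Component S' :=
  Quot.lift (Quot.mk _) fun _ _ hr => Quot.sound (G.reach_mono h hr)

theorem memIn_iff_componentMap_eq (h : S' ⊆ S) (x : G.Component S') (b : G.Component S) :
    G.MemIn x b ↔ G.componentMap h x = b := by
  constructor
  · rintro ⟨v, rfl, rfl⟩
    rfl
  · rintro rfl
    obtain ⟨v, rfl⟩ := Quot.exists_rep x
    exact ⟨v, rfl, rfl⟩

theorem finsum_countIn (h : S' ⊆ S) :
    ∑ᶠ b : G.Component S, G.countIn S S' b = G.numComponents S' := by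
  simp only [countIn, G.memIn_iff_componentMap_eq h]
  exact finsum_card_fiber _

theorem eqvGen_incidence (hG : G.Connected) (hS : U ⊆ S) (hT : U ⊆ T)
    (hST : S ∪ T = Set.univ) (a b : G.Component S ⊕ G.Component T) :
    Relation.EqvGen (fun a b => ∃ x : G.Component U,
      .inl (G.componentMap hS x) = a ∧ .inr (G.componentMap hT x) = b) a b := by
  set r : G.Component S ⊕ G.Component T → G.Component S ⊕ G.Component T → Prop :=
    fun a b => ∃ x : G.Component U,
      .inl (G.componentMap hS x) = a ∧ .inr (G.componentMap hT x) = b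
  let p (v : G.V) : G.Component S ⊕ G.Component T := .inl (Quot.mk _ v)
  have hincident (v : G.V) : Relation.EqvGen r (p v) (.inr (Quot.mk _ v)) :=
    .rel _ _ ⟨Quot.mk _ v, rfl, rfl⟩
  have hp (v w : G.V) : Relation.EqvGen r (p v) (p w) := by
    induction hG v w with
    | refl => exact .refl _
    | tail _ hstep ih =>
      obtain ⟨i, -, rfl⟩ := hstep
      refine ih.trans _ _ _ ?_
      rcases (hST ▸ Set.mem_univ i : i ∈ S ∪ T) with hi | hi
      · rw [show p _ = p _ from congrArg Sum.inl (Quot.sound (G.reach_adj hi _))]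
        exact .refl _
      · refine (hincident _).trans _ _ _ ?_
        rw [Quot.sound (G.reach_adj hi _)]
        exact (hincident _).symm _ _
  have hrep (a : G.Component S ⊕ G.Component T) : ∃ v, Relation.EqvGen r a (p v) := by
    rcases a with b | e
    · obtain ⟨v, rfl⟩ := Quot.exists_rep b
      exact ⟨v, .refl _⟩
    · obtain ⟨v, rfl⟩ := Quot.exists_rep e
      exact ⟨v, (hincident v).symm _ _⟩
  obtain ⟨v, hv⟩ := hrep a
  obtain ⟨w, hw⟩ := hrep b
  exact hv.trans _ _ _ ((hp v w).trans _ _ _ (hw.symm _ _))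

theorem numComponents_add_numComponents_le (hG : G.Connected) (hS : U ⊆ S) (hT : U ⊆ T)
    (hST : S ∪ T = Set.univ) :
    G.numComponents S + G.numComponents T ≤ G.numComponents U + 1 := by
  simpa only [numComponents, Nat.card_sum] using
    Nat.card_le_card_add_one_of_eqvGen _ _ (G.eqvGen_incidence hG hS hT hST)

end ColouredGraph

open ColouredGraph in
theorem bubble_edge_inequality_4d_general (G : ColouredGraph 5) (hG : G.Connected)
    (ℓ : Fin 5) (c : Finset (Fin 5)) (hℓ : ℓ ∈ c) :
    G.numComponents {ℓ}ᶜ + G.numComponents ↑c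
      ≤ 1 + ∑ᶠ b : G.Component {ℓ}ᶜ, G.countIn {ℓ}ᶜ ↑(c.erase ℓ) b := by
  have hS : (↑(c.erase ℓ) : Set (Fin 5)) ⊆ {ℓ}ᶜ := by
    simp only [Finset.coe_erase]
    exact Set.sdiff_subset_compl _ _
  have hT : (↑(c.erase ℓ) : Set (Fin 5)) ⊆ ↑c := Finset.coe_subset.2 (c.erase_subset ℓ)
  have hST : ({ℓ}ᶜ ∪ ↑c : Set (Fin 5)) = Set.univ :=
    Set.compl_subset_iff_union.1 (by simpa using hℓ)
  rw [G.finsum_countIn hS, add_comm 1]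
  exact G.numComponents_add_numComponents_le hG hS hT hST

open ColouredGraph in
/-- for any connected closed 5-coloured graph `𝒢`, any colour `ℓ`, and any
three-element colour set `c ⊆ {1,…,5}` with `ℓ ∈ c`, one has
`|B_ℓ| + |E(c)| − Σ_{b∈B_ℓ} |E_b(c)| ≤ 1`.  Here `B_ℓ` is the set of bubbles of colour
`ℓ`, `E(c)` the set of components of the subgraph of `𝒢` with colours in `c` (dual to
the simplicial edges of colour `c`), and `E_b(c)` the set of faces of the bubble `b` with
colour pair `c ∖ {ℓ}`. -/
theorem bubble_edge_inequality_4d (G : ColouredGraph 5) (hG : G.Connected)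
    (ℓ : Fin 5) (c : Finset (Fin 5)) (hc : c.card = 3) (hℓ : ℓ ∈ c) :
    G.numComponents {ℓ}ᶜ + G.numComponents ↑c
      ≤ 1 + ∑ᶠ b : G.Component {ℓ}ᶜ, G.countIn {ℓ}ᶜ ↑(c.erase ℓ) b :=
  bubble_edge_inequality_4d_general G hG ℓ c hℓ
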